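/- Let u ∈ 𝒮 be a π-integrable super-harmonic vector. Then: (i) μ_u(K_{·i}) = π_i + u_i for every i ∈ S; (ii) μ_u(w) + w_i ≤ u_i for every w ∈ ℳ and i ∈ S; (iii) u_i = sup_{w ∈ 𝒦} (μ_u(w) + w_i) = sup_{w ∈ ℳ} (μ_u(w) + w_i) for every i ∈ S. -/

import Mathlib

open Filter Topology

noncomputable section

namespace MaxPlus

variable {S : Type*}

/-- Weight of the path `p 0, p 1, ..., p n` for the kernel `A`. -/
def pathWeight (A : S → S → EReal) (p : ℕ → S) (n : ℕ) : EReal :=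
  ∑ k ∈ Finset.range n, A (p k) (p (k + 1))

/-- The max-plus star kernel `A*`: supremum of weights of paths of length `≥ 0`. -/
def star (A : S → S → EReal) (i j : S) : EReal :=
  ⨆ (n : ℕ) (p : ℕ → S) (_ : p 0 = i ∧ p n = j), pathWeight A p n

/-- The max-plus kernel `A⁺`: supremum of weights of paths of length `≥ 1`. -/
def plus (A : S → S → EReal) (i j : S) : EReal :=
  ⨆ (n : ℕ) (_ : 1 ≤ n) (p : ℕ → S) (_ : p 0 = i ∧ p n = j), pathWeight A p n

/-- `π` is a left super-harmonic row vector (with full support, being real valued). -/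
def LeftSuperharmonic (A : S → S → EReal) (π : S → ℝ) : Prop :=
  ∀ j, (⨆ i, ((π i : EReal) + A i j)) ≤ (π j : EReal)

/-- The Martin kernel `K_{ij} = A*_{ij} - π_j`. -/
def K (A : S → S → EReal) (π : S → ℝ) (i j : S) : EReal :=
  star A i j - (π j : EReal)

/-- `K♭_{ij} = A⁺_{ij} - π_j`. -/
def Kflat (A : S → S → EReal) (π : S → ℝ) (i j : S) : EReal :=
  plus A i j - (π j : EReal)

/-- The set `𝒦` of columns of the Martin kernel. -/
def kerCols (A : S → S → EReal) (π : S → ℝ) : Set (S → EReal) :=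
  Set.range fun j => fun i => K A π i j

/-- The Martin space `ℳ`: closure of `𝒦` in the product topology. -/
def martin (A : S → S → EReal) (π : S → ℝ) : Set (S → EReal) :=
  closure (kerCols A π)

/-- `μ_u(w)`: the limsup of `π_j + u_j` as `K_{·j} → w`. -/
def mu (A : S → S → EReal) (π : S → ℝ) (u : S → EReal) (w : S → EReal) : EReal :=
  ⨅ (W : Set (S → EReal)) (_ : W ∈ 𝓝 w),
    ⨆ (j : S) (_ : (fun i => K A π i j) ∈ W), ((π j : EReal) + u j)

/-- `w♭_i`: the liminf of `K♭_{ij}` as `K_{·j} → w`. -/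
def flat (A : S → S → EReal) (π : S → ℝ) (w : S → EReal) (i : S) : EReal :=
  ⨆ (W : Set (S → EReal)) (_ : W ∈ 𝓝 w),
    ⨅ (j : S) (_ : (fun i' => K A π i' j) ∈ W), Kflat A π i j

/-- The kernel `H(z,w) = μ_w(z)`. -/
def H (A : S → S → EReal) (π : S → ℝ) (z w : S → EReal) : EReal := mu A π w z

/-- The kernel `H♭(z,w) = μ_{w♭}(z)`. -/
def Hflat (A : S → S → EReal) (π : S → ℝ) (z w : S → EReal) : EReal :=
  mu A π (flat A π w) z

/-- The minimal Martin space `ℳᵐ = {w ∈ ℳ : H♭(w,w) = 0}`. -/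
def martinMin (A : S → S → EReal) (π : S → ℝ) : Set (S → EReal) :=
  {w | w ∈ martin A π ∧ Hflat A π w w = 0}

/-- The maximal circuit mean `ρ(A)`. -/
def maxCircuitMean (A : S → S → EReal) : EReal :=
  ⨆ (k : ℕ) (_ : 1 ≤ k) (p : ℕ → S) (_ : p k = p 0),
    (((k : ℝ)⁻¹ : ℝ) : EReal) * pathWeight A p k

/-- `α`-almost-geodesic with respect to the left super-harmonic vector `π`. -/
def IsAlmostGeodesic (A : S → S → EReal) (π : S → ℝ) (x : ℕ → S) : Prop :=
  ∃ α : ℝ, 0 ≤ α ∧ ∀ k : ℕ,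
    (π (x k) : EReal) ≤ (α : EReal) + (π (x 0) : EReal) + pathWeight A x k

/-- The set `𝒮` of `π`-integrable super-harmonic vectors. -/
def Sset (A : S → S → EReal) (π : S → ℝ) : Set (S → EReal) :=
  {u | (∀ i, u i ≠ ⊤) ∧ (∀ i, (⨆ j, A i j + u j) ≤ u i) ∧
    (⨆ j, ((π j : EReal) + u j)) < ⊤}

/-- The set `ℋ` of `π`-integrable harmonic vectors. -/
def Hset (A : S → S → EReal) (π : S → ℝ) : Set (S → EReal) :=
  {u | (∀ i, u i ≠ ⊤) ∧ (∀ i, (⨆ j, A i j + u j) = u i) ∧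
    (⨆ j, ((π j : EReal) + u j)) < ⊤}

/-- A vector is normalised if `sup_j (π_j + u_j) = 0`. -/
def Normalised (π : S → ℝ) (u : S → EReal) : Prop :=
  (⨆ j, ((π j : EReal) + u j)) = 0

/-- `ξ` is an extremal generator of `V`. -/
def ExtremalGen (V : Set (S → EReal)) (ξ : S → EReal) : Prop :=
  ξ ∈ V ∧ ξ ≠ (fun _ => (⊥ : EReal)) ∧
    ∀ u v, u ∈ V → v ∈ V → ξ = (fun i => u i ⊔ v i) → ξ = u ∨ ξ = v

end MaxPlus

/-!
Super-harmonicity of `u` propagates along paths, so `A*_{ij} + u_j ≤ u_i`, i.e.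
`K_{ij} + (π_j + u_j) ≤ u_i`. On the neighbourhood `{v | a < v_i}` of `w` every column `K_{·j}`
has `K_{ij} > a`, so there `π_j + u_j ≤ u_i - a`; hence `μ_u(w) ≤ u_i - a` for every real
`a < w_i`, which is (ii). Left super-harmonicity of `π` gives `A*_{ii} = 0`, so (ii) at
`w = K_{·i}` is the nontrivial half of (i), the other half coming from `j = i` in the limsup.
Then `K_{·i}` attains the suprema in (iii), which are bounded by (ii).
-/

namespace MaxPlus

section

variable {S : Type*} {A : S → S → EReal} {π : S → ℝ} {u : S → EReal}

@[simp]
lemma pathWeight_zero (A : S → S → EReal) (p : ℕ → S) : pathWeight A p 0 = 0 := by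
  simp [pathWeight]

lemma pathWeight_succ (A : S → S → EReal) (p : ℕ → S) (n : ℕ) :
    pathWeight A p (n + 1) = pathWeight A p n + A (p n) (p (n + 1)) := by
  simp [pathWeight, Finset.sum_range_succ]

lemma pathWeight_add_le_of_superharmonic (hsuper : ∀ i, (⨆ j, A i j + u j) ≤ u i)
    (p : ℕ → S) (n : ℕ) : pathWeight A p n + u (p n) ≤ u (p 0) := by
  induction n with
  | zero => simp
  | succ n ih =>
    calc pathWeight A p (n + 1) + u (p (n + 1))
        = pathWeight A p n + (A (p n) (p (n + 1)) + u (p (n + 1))) := by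
          rw [pathWeight_succ, add_assoc]
      _ ≤ pathWeight A p n + u (p n) := by
          gcongr
          exact (le_iSup (fun j => A (p n) j + u j) _).trans (hsuper (p n))
      _ ≤ u (p 0) := ih

lemma add_pathWeight_le_of_leftSuperharmonic (hπ : LeftSuperharmonic A π) (p : ℕ → S)
    (n : ℕ) : (π (p 0) : EReal) + pathWeight A p n ≤ π (p n) := by
  induction n with
  | zero => simp
  | succ n ih =>
    calc (π (p 0) : EReal) + pathWeight A p (n + 1)
        = (π (p 0) + pathWeight A p n) + A (p n) (p (n + 1)) := by
          rw [pathWeight_succ, add_assoc]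
      _ ≤ π (p n) + A (p n) (p (n + 1)) := by gcongr
      _ ≤ π (p (n + 1)) :=
          (le_iSup (fun i => (π i : EReal) + A i (p (n + 1))) _).trans (hπ _)

lemma star_le_sub (hπ : LeftSuperharmonic A π) (i j : S) :
    star A i j ≤ ((π j - π i : ℝ) : EReal) := by
  refine iSup_le fun n => iSup_le fun p => iSup_le fun ⟨hp0, hpn⟩ => ?_
  rw [EReal.coe_sub, EReal.le_sub_iff_add_le (.inl (EReal.coe_ne_bot _))
    (.inl (EReal.coe_ne_top _)), add_comm, ← hp0, ← hpn]
  exact add_pathWeight_le_of_leftSuperharmonic hπ p n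

lemma star_self (hπ : LeftSuperharmonic A π) (i : S) : star A i i = 0 := by
  refine le_antisymm (by simpa using star_le_sub hπ i i) ?_
  exact le_iSup_of_le 0 <| le_iSup_of_le (fun _ => i) <| le_iSup_of_le ⟨rfl, rfl⟩ (by simp)

lemma K_self (hπ : LeftSuperharmonic A π) (i : S) : K A π i i = ((-π i : ℝ) : EReal) := by
  rw [K, star_self hπ, zero_sub, EReal.coe_neg]

lemma star_add_le_of_superharmonic (hsuper : ∀ i, (⨆ j, A i j + u j) ≤ u i) (i j : S) :
    star A i j + u j ≤ u i := by
  refine EReal.add_le_of_forall_lt fun a ha b hb => ?_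
  simp only [star, lt_iSup_iff] at ha
  obtain ⟨n, p, ⟨hp0, hpn⟩, hap⟩ := ha
  calc a + b ≤ pathWeight A p n + u (p n) := by rw [hpn]; exact add_le_add hap.le hb.le
    _ ≤ u i := hp0 ▸ pathWeight_add_le_of_superharmonic hsuper p n

lemma K_add_le_of_superharmonic (hsuper : ∀ i, (⨆ j, A i j + u j) ≤ u i) (i j : S) :
    K A π i j + ((π j : EReal) + u j) ≤ u i := by
  rw [K, ← add_assoc, EReal.sub_add_cancel]
  exact star_add_le_of_superharmonic hsuper i j

lemma le_mu_K (A : S → S → EReal) (π : S → ℝ) (u : S → EReal) (i : S) :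
    (π i : EReal) + u i ≤ mu A π u (fun x => K A π x i) :=
  le_iInf₂ fun _ hW => le_iSup₂_of_le i (mem_of_mem_nhds hW) le_rfl

lemma mu_le_sub_of_lt (hsuper : ∀ i, (⨆ j, A i j + u j) ≤ u i) {w : S → EReal} {i : S}
    {a : ℝ} (ha : (a : EReal) < w i) : mu A π u w ≤ u i - a := by
  have hW : {v : S → EReal | (a : EReal) < v i} ∈ 𝓝 w :=
    (isOpen_lt continuous_const (continuous_apply i)).mem_nhds ha
  refine (iInf₂_le _ hW).trans (iSup₂_le fun j (hj : (a : EReal) < K A π i j) => ?_)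
  rw [EReal.le_sub_iff_add_le (.inl (EReal.coe_ne_bot a)) (.inl (EReal.coe_ne_top a)),
    add_comm]
  exact (add_le_add_left hj.le _).trans (K_add_le_of_superharmonic hsuper i j)

lemma mu_add_le_of_superharmonic (hsuper : ∀ i, (⨆ j, A i j + u j) ≤ u i)
    (w : S → EReal) (i : S) : mu A π u w + w i ≤ u i := by
  refine EReal.add_le_of_forall_lt fun m hm b hb => ?_
  obtain ⟨a, hba, haw⟩ := EReal.exists_between_coe_real hb
  calc m + b ≤ m + a := by gcongr
    _ ≤ u i := EReal.add_le_of_le_sub (hm.le.trans (mu_le_sub_of_lt hsuper haw))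

lemma mu_K (hπ : LeftSuperharmonic A π) (hsuper : ∀ i, (⨆ j, A i j + u j) ≤ u i) (i : S) :
    mu A π u (fun x => K A π x i) = (π i : EReal) + u i := by
  refine le_antisymm ?_ (le_mu_K A π u i)
  have h := mu_add_le_of_superharmonic (π := π) hsuper (fun x => K A π x i) i
  rwa [K_self hπ, ← EReal.le_sub_iff_add_le (.inl (EReal.coe_ne_bot _))
    (.inl (EReal.coe_ne_top _)), EReal.coe_neg, sub_eq_add_neg, neg_neg, add_comm] at h

lemma mu_K_add_K_self (hπ : LeftSuperharmonic A π) (hsuper : ∀ i, (⨆ j, A i j + u j) ≤ u i)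
    (i : S) : mu A π u (fun x => K A π x i) + K A π i i = u i := by
  rw [mu_K hπ hsuper, K_self hπ, EReal.coe_neg, add_comm (π i : EReal), ← sub_eq_add_neg,
    EReal.add_sub_cancel_right]

end

theorem mu_superharmonic_general {S : Type*} (A : S → S → EReal)
    (π : S → ℝ) (hπ : LeftSuperharmonic A π)
    (u : S → EReal)
    (hsuper : ∀ i, (⨆ j, A i j + u j) ≤ u i) :
    (∀ i, mu A π u (fun x => K A π x i) = (π i : EReal) + u i) ∧
    (∀ w ∈ martin A π, ∀ i, mu A π u w + w i ≤ u i) ∧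
    (∀ i, u i = ⨆ w ∈ kerCols A π, (mu A π u w + w i)) ∧
    (∀ i, u i = ⨆ w ∈ martin A π, (mu A π u w + w i)) := by
  have hbound (s : Set (S → EReal)) (i : S) (hs : (fun x => K A π x i) ∈ s) :
      u i = ⨆ w ∈ s, (mu A π u w + w i) :=
    le_antisymm (le_iSup₂_of_le _ hs (mu_K_add_K_self hπ hsuper i).ge)
      (iSup₂_le fun w _ => mu_add_le_of_superharmonic hsuper w i)
  exact ⟨mu_K hπ hsuper, fun w _ i => mu_add_le_of_superharmonic hsuper w i,
    fun i => hbound _ i ⟨i, rfl⟩, fun i => hbound _ i (subset_closure ⟨i, rfl⟩)⟩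

/-- for a `π`-integrable super-harmonic vector `u`:
(i) `μ_u(K_{·i}) = π_i + u_i`; (ii) `μ_u(w) + w_i ≤ u_i` for `w ∈ ℳ`;
(iii) `u_i = sup_{w ∈ 𝒦} (μ_u(w) + w_i) = sup_{w ∈ ℳ} (μ_u(w) + w_i)`. -/
theorem mu_superharmonic {S : Type*} (A : S → S → EReal)
    (hA : ∀ i j, A i j ≠ ⊤) (π : S → ℝ) (hπ : LeftSuperharmonic A π)
    (u : S → EReal) (hutop : ∀ i, u i ≠ ⊤)
    (hsuper : ∀ i, (⨆ j, A i j + u j) ≤ u i)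
    (hint : (⨆ j, ((π j : EReal) + u j)) < ⊤) :
    (∀ i, mu A π u (fun x => K A π x i) = (π i : EReal) + u i) ∧
    (∀ w ∈ martin A π, ∀ i, mu A π u w + w i ≤ u i) ∧
    (∀ i, u i = ⨆ w ∈ kerCols A π, (mu A π u w + w i)) ∧
    (∀ i, u i = ⨆ w ∈ martin A π, (mu A π u w + w i)) :=
  mu_superharmonic_general A π hπ u hsuper

end MaxPlus
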